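/- The tracial geometric mean is subadditive in its first argument: for positive semidefinite ℓ×ℓ complex matrices X₁,…,Xₙ and Y, tgm(Σⱼ Xⱼ, Y) ≤ Σⱼ tgm(Xⱼ, Y). -/

import Mathlib

/-! Since `√X Y √X` and `√Y X √Y` have the same characteristic polynomial,
`tgm(X, Y) = tr √(√Y X √Y)`, so it suffices to show that `A ↦ tr √A` is subadditive on the
summands `Aⱼ = √Y Xⱼ √Y`. Let `C = ∑ Aⱼ` and let `D` be the square root of the pseudo-inverse of
`C`, so that `√C = C D` and `D C D ≤ 1`. Then `tr √C = ∑ tr (Aⱼ D)`, and each term is at most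
`tr √Aⱼ`: `K = √Aⱼ D` satisfies `K⋆K = D Aⱼ D ≤ D C D ≤ 1`, hence `K + K⋆ ≤ 2`, and
`2 re tr (Aⱼ D) = re tr (√Aⱼ (K + K⋆)) ≤ 2 tr √Aⱼ`. -/

open Matrix
open scoped ComplexOrder

namespace Matrix.PosSemidef

/-- The positive semidefinite square root of a positive semidefinite matrix
(the definition removed from Mathlib, restored verbatim). -/
noncomputable def sqrt {n 𝕜 : Type*} [Fintype n] [DecidableEq n] [RCLike 𝕜]
    {A : Matrix n n 𝕜} (hA : PosSemidef A) : Matrix n n 𝕜 :=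
  hA.1.eigenvectorUnitary.1 * diagonal ((↑) ∘ (√·) ∘ hA.1.eigenvalues) *
  (star hA.1.eigenvectorUnitary : Matrix n n 𝕜)

lemma posSemidef_sqrt {n 𝕜 : Type*} [Fintype n] [DecidableEq n] [RCLike 𝕜]
    {A : Matrix n n 𝕜} (hA : PosSemidef A) : PosSemidef hA.sqrt := by
  apply PosSemidef.mul_mul_conjTranspose_same
  refine posSemidef_diagonal_iff.mpr fun i ↦ ?_
  rw [Function.comp_apply, RCLike.nonneg_iff]
  constructor
  · simp only [RCLike.ofReal_re]
    exact Real.sqrt_nonneg _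
  · simp only [RCLike.ofReal_im]

end Matrix.PosSemidef

/-- The product `√X * Y * √X` is positive semidefinite. -/
theorem sqrt_mul_mul_sqrt_posSemidef {n : Type*} [Fintype n] [DecidableEq n]
    {X Y : Matrix n n ℂ} (hX : X.PosSemidef) (hY : Y.PosSemidef) :
    (hX.sqrt * Y * hX.sqrt).PosSemidef := by
  have h := hY.conjTranspose_mul_mul_same (B := hX.sqrt)
  rwa [hX.posSemidef_sqrt.isHermitian.eq] at h

/-- The tracial geometric mean `tgm(X,Y) = trace √(√X·Y·√X)`. -/
noncomputable def tgm {n : Type*} [Fintype n] [DecidableEq n]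
    {X Y : Matrix n n ℂ} (hX : X.PosSemidef) (hY : Y.PosSemidef) : ℝ :=
  ((sqrt_mul_mul_sqrt_posSemidef hX hY).sqrt.trace).re

/-- A finite sum of positive semidefinite matrices is positive semidefinite. -/
theorem posSemidef_sum {n ℓ : ℕ} (X : Fin n → Matrix (Fin ℓ) (Fin ℓ) ℂ)
    (h : ∀ j, (X j).PosSemidef) : (∑ j, X j).PosSemidef :=
  Finset.sum_induction X Matrix.PosSemidef (fun _ _ ha hb => ha.add hb)
    Matrix.PosSemidef.zero (fun i _ => h i)

open scoped MatrixOrder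

theorem add_star_le_two_of_star_mul_self_le_one {R : Type*} [Ring R] [PartialOrder R]
    [StarRing R] [StarOrderedRing R] {k : R} (hk : star k * k ≤ 1) : k + star k ≤ 2 := by
  have h := star_mul_self_nonneg (1 - k)
  rw [star_sub, star_one] at h
  calc k + star k ≤ 1 + star k * k := by
        rw [← sub_nonneg]
        convert h using 1
        noncomm_ring
    _ ≤ 1 + 1 := add_le_add_right hk 1
    _ = 2 := one_add_one_eq_two

namespace Matrix

variable {n 𝕜 : Type*} [Fintype n] [DecidableEq n] [RCLike 𝕜]

lemma PosSemidef.sqrt_eq_cfcSqrt {A : Matrix n n 𝕜} (hA : A.PosSemidef) :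
    hA.sqrt = CFC.sqrt A := by
  rw [CFC.sqrt_eq_real_sqrt A hA.nonneg, cfcₙ_eq_cfc, hA.1.cfc_eq]
  rfl

lemma trace_cfc_eq_of_charpoly_eq {A B : Matrix n n 𝕜} (hA : A.IsHermitian)
    (hB : B.IsHermitian) (h : A.charpoly = B.charpoly) (f : ℝ → ℝ) :
    (cfc f A).trace = (cfc f B).trace := by
  rw [trace_eq_neg_charpoly_nextCoeff, trace_eq_neg_charpoly_nextCoeff, hA.charpoly_cfc_eq,
    hB.charpoly_cfc_eq, (hA.eigenvalues_eq_eigenvalues_iff hB).2 h]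

lemma trace_sqrt_eq_of_charpoly_eq {A B : Matrix n n 𝕜} (hA : 0 ≤ A) (hB : 0 ≤ B)
    (h : A.charpoly = B.charpoly) : (CFC.sqrt A).trace = (CFC.sqrt B).trace := by
  rw [CFC.sqrt_eq_real_sqrt A, CFC.sqrt_eq_real_sqrt B, cfcₙ_eq_cfc, cfcₙ_eq_cfc]
  exact trace_cfc_eq_of_charpoly_eq hA.posSemidef.1 hB.posSemidef.1 h _

lemma charpoly_sqrt_mul_mul_sqrt {A : Matrix n n 𝕜} (hA : 0 ≤ A) (B : Matrix n n 𝕜) :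
    (CFC.sqrt A * B * CFC.sqrt A).charpoly = (B * A).charpoly := by
  rw [mul_assoc, charpoly_mul_comm, mul_assoc, CFC.sqrt_mul_sqrt_self A]

lemma trace_mul_nonneg {R P : Matrix n n 𝕜} (hR : 0 ≤ R) (hP : 0 ≤ P) :
    0 ≤ (R * P).trace := by
  have h : (R * P).trace = (CFC.sqrt R * P * CFC.sqrt R).trace := by
    rw [trace_mul_cycle, CFC.sqrt_mul_sqrt_self R]
  rw [h]
  exact ((CFC.sqrt_nonneg R).isSelfAdjoint.conjugate_nonneg hP).posSemidef.trace_nonneg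

lemma trace_mul_le_trace_mul {R S T : Matrix n n 𝕜} (hR : 0 ≤ R) (hST : S ≤ T) :
    (R * S).trace ≤ (R * T).trace := by
  rw [← sub_nonneg, ← trace_sub, ← mul_sub]
  exact trace_mul_nonneg hR (sub_nonneg.2 hST)

lemma re_trace_mul_le_of_star_mul_self_le_one {R K : Matrix n n 𝕜} (hR : 0 ≤ R)
    (hK : star K * K ≤ 1) : RCLike.re (R * K).trace ≤ RCLike.re R.trace := by
  have hstar : RCLike.re (R * star K).trace = RCLike.re (R * K).trace := by
    nth_rewrite 1 [← hR.isSelfAdjoint.star_eq]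
    rw [star_eq_conjTranspose, star_eq_conjTranspose, ← conjTranspose_mul, trace_conjTranspose,
      trace_mul_comm, RCLike.star_def, RCLike.conj_re]
  have h := RCLike.re_le_re
    (trace_mul_le_trace_mul hR (add_star_le_two_of_star_mul_self_le_one hK))
  rw [mul_add, trace_add, map_add, hstar, mul_two, trace_add, map_add] at h
  linarith

-- Since `(0 : ℝ)⁻¹ = 0`, `cfc (fun t => (√t)⁻¹) C` is the square root of the pseudo-inverse of `C`.
lemma re_trace_mul_cfc_inv_sqrt_le {A C : Matrix n n 𝕜} (hA : 0 ≤ A) (hAC : A ≤ C) :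
    RCLike.re (A * cfc (fun t => (√t)⁻¹) C).trace ≤ RCLike.re (CFC.sqrt A).trace := by
  have hC : 0 ≤ C := hA.trans hAC
  have hcont : ∀ f : ℝ → ℝ, ContinuousOn f (spectrum ℝ C) := C.finite_real_spectrum.continuousOn
  set D := cfc (fun t => (√t)⁻¹) C
  have hD : IsSelfAdjoint D := IsSelfAdjoint.cfc
  have hDCD : D * C * D ≤ 1 := by
    rw [← cfc_id' ℝ C, ← cfc_mul _ _ C (hcont _) (hcont _), ← cfc_mul _ _ C (hcont _) (hcont _)]
    refine cfc_le_one _ C fun t _ => ?_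
    rw [← div_eq_inv_mul, Real.div_sqrt, ← div_eq_mul_inv]
    exact div_self_le_one _
  have hK : star (CFC.sqrt A * D) * (CFC.sqrt A * D) ≤ 1 := by
    rw [star_mul, hD.star_eq, (CFC.sqrt_nonneg A).isSelfAdjoint.star_eq, mul_assoc,
      ← mul_assoc (CFC.sqrt A), CFC.sqrt_mul_sqrt_self A, ← mul_assoc]
    exact (hD.conjugate_le_conjugate hAC).trans hDCD
  have h := re_trace_mul_le_of_star_mul_self_le_one (CFC.sqrt_nonneg A) hK
  rwa [← mul_assoc, CFC.sqrt_mul_sqrt_self A] at h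

lemma re_trace_sqrt_sum_le {ι : Type*} (s : Finset ι) (A : ι → Matrix n n 𝕜)
    (hA : ∀ i ∈ s, 0 ≤ A i) :
    RCLike.re (CFC.sqrt (∑ i ∈ s, A i)).trace ≤ ∑ i ∈ s, RCLike.re (CFC.sqrt (A i)).trace := by
  set C := ∑ i ∈ s, A i
  have hC : 0 ≤ C := Finset.sum_nonneg hA
  have hcont : ∀ f : ℝ → ℝ, ContinuousOn f (spectrum ℝ C) := C.finite_real_spectrum.continuousOn
  have hsqrt : CFC.sqrt C = C * cfc (fun t => (√t)⁻¹) C := by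
    rw [CFC.sqrt_eq_real_sqrt C, cfcₙ_eq_cfc]
    nth_rewrite 2 [← cfc_id' ℝ C]
    rw [← cfc_mul _ _ C (hcont _) (hcont _)]
    simp only [← div_eq_mul_inv, Real.div_sqrt]
  calc RCLike.re (CFC.sqrt C).trace
      = ∑ i ∈ s, RCLike.re (A i * cfc (fun t => (√t)⁻¹) C).trace := by
        rw [hsqrt, Finset.sum_mul, trace_sum, map_sum]
    _ ≤ ∑ i ∈ s, RCLike.re (CFC.sqrt (A i)).trace :=
        Finset.sum_le_sum fun i hi =>
          re_trace_mul_cfc_inv_sqrt_le (hA i hi) (Finset.single_le_sum hA hi)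

end Matrix

lemma tgm_eq_re_trace_sqrt_swap {n : Type*} [Fintype n] [DecidableEq n]
    {X Y : Matrix n n ℂ} (hX : X.PosSemidef) (hY : Y.PosSemidef) :
    tgm hX hY = (CFC.sqrt (CFC.sqrt Y * X * CFC.sqrt Y)).trace.re := by
  rw [tgm, (sqrt_mul_mul_sqrt_posSemidef hX hY).sqrt_eq_cfcSqrt, hX.sqrt_eq_cfcSqrt]
  have hXY := (CFC.sqrt_nonneg X).isSelfAdjoint.conjugate_nonneg hY.nonneg
  have hYX := (CFC.sqrt_nonneg Y).isSelfAdjoint.conjugate_nonneg hX.nonneg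
  have hchar :
      (CFC.sqrt X * Y * CFC.sqrt X).charpoly = (CFC.sqrt Y * X * CFC.sqrt Y).charpoly := by
    rw [charpoly_sqrt_mul_mul_sqrt hX.nonneg, charpoly_sqrt_mul_mul_sqrt hY.nonneg,
      charpoly_mul_comm]
  rw [trace_sqrt_eq_of_charpoly_eq hXY hYX hchar]

/-- Subadditivity of the tracial geometric mean in its first argument:
`tgm(Σⱼ Xⱼ, Y) ≤ Σⱼ tgm(Xⱼ, Y)`. -/
theorem tgm_sum_left_le {n ℓ : ℕ} {X : Fin n → Matrix (Fin ℓ) (Fin ℓ) ℂ}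
    {Y : Matrix (Fin ℓ) (Fin ℓ) ℂ}
    (hX : ∀ j, (X j).PosSemidef) (hY : Y.PosSemidef) :
    tgm (posSemidef_sum X hX) hY ≤ ∑ j, tgm (hX j) hY := by
  simp only [tgm_eq_re_trace_sqrt_swap, Finset.mul_sum, Finset.sum_mul]
  exact Matrix.re_trace_sqrt_sum_le _ _ fun j _ =>
    (CFC.sqrt_nonneg Y).isSelfAdjoint.conjugate_nonneg (hX j).nonneg
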